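/- arXiv:2508.18422 — 8 statements merged into one kernel-verified Lean document; each statement's English description precedes it below -/
import Mathlib

section
/- The pinwheel instance (2, 3, x) is unschedulable for every integer x ≥ 2. That is, there is no function f : ℕ → Fin 3 such that job 0 appears in every window of 2 consecutive days, job 1 in every window of 3 consecutive days, and job 2 in every window of x consecutive days. -/
/-- A schedule for a pinwheel instance (list of periods) is valid if every job `i`
appears in every window of `a_i` consecutive days. -/
def Valid (a : List ℕ) (f : ℕ → Fin a.length) : Prop :=
  ∀ (i : Fin a.length) (t : ℕ), ∃ s, t ≤ s ∧ s < t + a.get i ∧ f s = i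

/-- A pinwheel instance is schedulable if a valid schedule exists. -/
def Schedulable (a : List ℕ) : Prop := ∃ f, Valid a f

/-- Density of a pinwheel instance: sum of reciprocals of the periods. -/
noncomputable def density (a : List ℕ) : ℝ := (a.map fun x => (1:ℝ)/x).sum

theorem stmt_0 (x : ℕ) (hx : 2 ≤ x) : ¬ Schedulable [2, 3, x] := by
  rintro ⟨f, hf⟩
  -- job 2 appears at some s ≥ 1
  obtain ⟨s, hs1, hs2, hs⟩ := hf ⟨2, by norm_num⟩ 1
  simp only [List.get] at hs2
  -- job 0 appears in {s-1, s}: must be s-1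
  obtain ⟨u, hu1, hu2, hu⟩ := hf ⟨0, by norm_num⟩ (s - 1)
  simp only [List.get] at hu2
  have hus : u = s - 1 := by
    rcases (by omega : u = s - 1 ∨ u = s) with h | h
    · exact h
    · rw [h, hs] at hu; exact absurd (congrArg Fin.val hu) (by norm_num)
  -- job 0 appears in {s, s+1}: must be s+1
  obtain ⟨v, hv1, hv2, hv⟩ := hf ⟨0, by norm_num⟩ s
  simp only [List.get] at hv2
  have hvs : v = s + 1 := by
    rcases (by omega : v = s ∨ v = s + 1) with h | h
    · rw [h, hs] at hv; exact absurd (congrArg Fin.val hv) (by norm_num)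
    · exact h
  -- job 1 appears in {s-1, s, s+1}: contradiction
  obtain ⟨w, hw1, hw2, hw⟩ := hf ⟨1, by norm_num⟩ (s - 1)
  simp only [List.get] at hw2
  rcases (by omega : w = s - 1 ∨ w = s ∨ w = s + 1) with h | h | h
  · rw [h, ← hus, hu] at hw; exact absurd (congrArg Fin.val hw) (by norm_num)
  · rw [h, hs] at hw; exact absurd (congrArg Fin.val hw) (by norm_num)
  · rw [h, ← hvs, hv] at hw; exact absurd (congrArg Fin.val hw) (by norm_num)
end

section
/- The pinwheel instance (3, 4, 4, x) is unschedulable for every integer x ≥ 2. -/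
set_option synthInstance.maxSize 5000 in
set_option maxHeartbeats 1000000 in
lemma pinwheel_key : ∀ a b c d e : Fin 4,
    (a = 0 ∨ b = 0 ∨ c = 0) → (b = 0 ∨ c = 0 ∨ d = 0) → (c = 0 ∨ d = 0 ∨ e = 0) →
    (a = 1 ∨ b = 1 ∨ c = 1 ∨ d = 1) → (b = 1 ∨ c = 1 ∨ d = 1 ∨ e = 1) →
    (a = 2 ∨ b = 2 ∨ c = 2 ∨ d = 2) → (b = 2 ∨ c = 2 ∨ d = 2 ∨ e = 2) →
    c ≠ 3 := by decide

theorem stmt_1 (x : ℕ) (hx : 2 ≤ x) : ¬ Schedulable [3, 4, 4, x] := by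
  rintro ⟨f, hf⟩
  let F : ℕ → Fin 4 := f
  obtain ⟨s, hs2, -, hs3⟩ := hf ⟨3, by simp⟩ 2
  have w0 : ∀ t : ℕ, ∃ u, t ≤ u ∧ u < t + 3 ∧ F u = 0 := by
    intro t; obtain ⟨u, h1, h2, h4⟩ := hf ⟨0, by simp⟩ t
    exact ⟨u, h1, h2, h4⟩
  have w1 : ∀ t : ℕ, ∃ u, t ≤ u ∧ u < t + 4 ∧ F u = 1 := by
    intro t; obtain ⟨u, h1, h2, h4⟩ := hf ⟨1, by simp⟩ t
    exact ⟨u, h1, h2, h4⟩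
  have w2 : ∀ t : ℕ, ∃ u, t ≤ u ∧ u < t + 4 ∧ F u = 2 := by
    intro t; obtain ⟨u, h1, h2, h4⟩ := hf ⟨2, by simp⟩ t
    exact ⟨u, h1, h2, h4⟩
  have hs3' : F s = 3 := hs3
  obtain ⟨u1, a1, b1, c1⟩ := w0 (s - 2)
  obtain ⟨u2, a2, b2, c2⟩ := w0 (s - 1)
  obtain ⟨u3, a3, b3, c3⟩ := w0 s
  obtain ⟨v1, d1, e1, g1⟩ := w1 (s - 2)
  obtain ⟨v2, d2, e2, g2⟩ := w1 (s - 1)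
  obtain ⟨z1, p1, q1, r1⟩ := w2 (s - 2)
  obtain ⟨z2, p2, q2, r2⟩ := w2 (s - 1)
  refine pinwheel_key (F (s-2)) (F (s-1)) (F s) (F (s+1)) (F (s+2)) ?_ ?_ ?_ ?_ ?_ ?_ ?_ hs3'
  · rcases (by omega : u1 = s-2 ∨ u1 = s-1 ∨ u1 = s) with h|h|h <;> rw [h] at c1 <;> simp [c1]
  · rcases (by omega : u2 = s-1 ∨ u2 = s ∨ u2 = s+1) with h|h|h <;> rw [h] at c2 <;> simp [c2]
  · rcases (by omega : u3 = s ∨ u3 = s+1 ∨ u3 = s+2) with h|h|h <;> rw [h] at c3 <;> simp [c3]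
  · rcases (by omega : v1 = s-2 ∨ v1 = s-1 ∨ v1 = s ∨ v1 = s+1) with h|h|h|h <;> rw [h] at g1 <;> simp [g1]
  · rcases (by omega : v2 = s-1 ∨ v2 = s ∨ v2 = s+1 ∨ v2 = s+2) with h|h|h|h <;> rw [h] at g2 <;> simp [g2]
  · rcases (by omega : z1 = s-2 ∨ z1 = s-1 ∨ z1 = s ∨ z1 = s+1) with h|h|h|h <;> rw [h] at r1 <;> simp [r1]
  · rcases (by omega : z2 = s-1 ∨ z2 = s ∨ z2 = s+1 ∨ z2 = s+2) with h|h|h|h <;> rw [h] at r2 <;> simp [r2]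
end

section
/- For every integer m ≥ 2 and every integer x ≥ 2, the pinwheel instance consisting of one job with period m, (m − 1) jobs with period m + 1, and one job with period x is unschedulable. -/
theorem stmt_2 (m x : ℕ) (hm : 2 ≤ m) (hx : 2 ≤ x) :
    ¬ Schedulable (m :: (List.replicate (m - 1) (m + 1) ++ [x])) := by
  rintro ⟨f, hf⟩
  have hL : (m :: (List.replicate (m - 1) (m + 1) ++ [x])).length = m + 1 := by
    simp; omega
  have hmlt : m < (m :: (List.replicate (m - 1) (m + 1) ++ [x])).length := by omega
  have h0lt : 0 < (m :: (List.replicate (m - 1) (m + 1) ++ [x])).length := by omega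
  have hne : (⟨0, h0lt⟩ : Fin _) ≠ (⟨m, hmlt⟩ : Fin _) := by
    intro h
    have : (0:ℕ) = m := congrArg Fin.val h
    omega
  have hget0 : (m :: (List.replicate (m - 1) (m + 1) ++ [x])).get ⟨0, h0lt⟩ = m := rfl
  have hget_small : ∀ i : Fin (m :: (List.replicate (m - 1) (m + 1) ++ [x])).length,
      (i:ℕ) ≠ m → (m :: (List.replicate (m - 1) (m + 1) ++ [x])).get i ≤ m + 1 := by
    intro i hi
    rcases i with ⟨iv, hiv⟩
    match iv, hiv, hi with
    | 0, _, _ => simp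
    | (j+1), hiv, hi =>
      have hiv' : j + 1 < m + 1 := hL ▸ hiv
      have hi' : j + 1 ≠ m := hi
      have hj : j < m - 1 := by omega
      have h1 : (m :: (List.replicate (m - 1) (m + 1) ++ [x])).get ⟨j+1, hiv⟩
          = (List.replicate (m-1) (m+1) ++ [x]).get ⟨j, by simp; omega⟩ := rfl
      rw [h1]
      have h2 : (List.replicate (m-1) (m+1) ++ [x]).get ⟨j, by simp; omega⟩ = (m+1) := by
        rw [List.get_eq_getElem]
        rw [List.getElem_append_left (by simpa using hj)]
        simp
      omega
  -- key uniqueness lemma: in any window of m+1 slots containing an x-slot,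
  -- the schedule is injective
  have key : ∀ s lo : ℕ, f s = ⟨m, hmlt⟩ → lo ≤ s → s ≤ lo + m →
      ∀ u v, lo ≤ u → u ≤ lo + m → lo ≤ v → v ≤ lo + m → f u = f v → u = v := by
    intro s lo hs hlo1 hlo2
    have hslot : ∀ i : Fin (m :: (List.replicate (m - 1) (m + 1) ++ [x])).length,
        ∃ w, lo ≤ w ∧ w ≤ lo + m ∧ f w = i := by
      intro i
      by_cases hi : (i:ℕ) = m
      · have hieq : i = ⟨m, hmlt⟩ := Fin.ext hi
        exact ⟨s, hlo1, hlo2, by rw [hs, hieq]⟩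
      · obtain ⟨w, hw1, hw2, hw3⟩ := hf i lo
        have := hget_small i hi
        exact ⟨w, hw1, by omega, hw3⟩
    choose slot h1 h2 h3 using hslot
    have hinj : Function.Injective slot := by
      intro i j hij
      have hi := h3 i
      rw [hij, h3 j] at hi
      exact hi.symm
    have hsub : Finset.image slot Finset.univ ⊆ Finset.Icc lo (lo + m) := by
      intro w hw
      obtain ⟨i, -, hi⟩ := Finset.mem_image.mp hw
      exact Finset.mem_Icc.mpr ⟨hi ▸ h1 i, hi ▸ h2 i⟩
    have hcard : (Finset.Icc lo (lo + m)).card ≤ (Finset.image slot Finset.univ).card := by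
      rw [Finset.card_image_of_injective _ hinj, Finset.card_univ, Fintype.card_fin, hL,
        Nat.card_Icc]
      omega
    have heq : Finset.image slot Finset.univ = Finset.Icc lo (lo + m) :=
      Finset.eq_of_subset_of_card_le hsub hcard
    intro u v hu1 hu2 hv1 hv2 huv
    have hu : u ∈ Finset.Icc lo (lo + m) := Finset.mem_Icc.mpr ⟨hu1, hu2⟩
    have hv : v ∈ Finset.Icc lo (lo + m) := Finset.mem_Icc.mpr ⟨hv1, hv2⟩
    rw [← heq] at hu hv
    obtain ⟨i, -, hi⟩ := Finset.mem_image.mp hu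
    obtain ⟨j, -, hj⟩ := Finset.mem_image.mp hv
    have hfu : f u = i := hi ▸ h3 i
    have hfv : f v = j := hj ▸ h3 j
    have : i = j := by rw [← hfu, ← hfv, huv]
    rw [← hi, ← hj, this]
  -- main argument
  obtain ⟨s, hs1, hs2, hs3⟩ := hf ⟨m, hmlt⟩ m
  -- occurrence of job 0 in [s-m, s)
  obtain ⟨p, hp1, hp2, hp3⟩ := hf ⟨0, h0lt⟩ (s - m)
  rw [hget0] at hp2
  have hps : p < s := by omega
  -- occurrence of job 0 in [s+1, s+m]
  obtain ⟨q, hq1, hq2, hq3⟩ := hf ⟨0, h0lt⟩ (s + 1)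
  rw [hget0] at hq2
  -- q > p + m
  have hpq : p + m < q := by
    by_contra hcon
    push_neg at hcon
    have := key s p hs3 (by omega) (by omega) p q (le_refl p) (by omega) (by omega) hcon
      (by rw [hp3, hq3])
    omega
  -- occurrence of job 0 in [p+1, p+m]
  obtain ⟨c, hc1, hc2, hc3⟩ := hf ⟨0, h0lt⟩ (p + 1)
  rw [hget0] at hc2
  have hcs : c ≠ s := by
    intro h
    rw [h, hs3] at hc3
    exact hne hc3.symm
  rcases lt_or_gt_of_ne hcs with hlt | hgt
  · have := key s (s - m) hs3 (by omega) (by omega) p c (by omega) (by omega) (by omega)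
      (by omega) (by rw [hp3, hc3])
    omega
  · have := key s s hs3 (le_refl s) (by omega) q c (by omega) (by omega) (by omega)
      (by omega) (by rw [hq3, hc3])
    omega
end

section
/- If a pinwheel instance A containing two jobs with the same period 2k (for a positive integer k) is such that the instance obtained by replacing those two jobs with a single job of period k is schedulable, then A is schedulable. -/
open Nat

section Count

variable {p : ℕ → Prop} [DecidablePred p]

theorem Nat.exists_count_eq_of_count_le_of_lt_count {t u j : ℕ} (ht : count p t ≤ j)
    (hu : j < count p u) : ∃ s, t ≤ s ∧ s < u ∧ p s ∧ count p s = j := by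
  induction u with
  | zero => simp at hu
  | succ u ih =>
    by_cases hj : j < count p u
    · obtain ⟨s, hts, hsu, hs⟩ := ih hj
      exact ⟨s, hts, hsu.trans u.lt_succ_self, hs⟩
    · have hpu : p u := count_lt_count_succ_iff.mp (by omega)
      have hsucc : count p (u + 1) = count p u + 1 := count_succ_eq_succ_count_iff.mpr hpu
      have htu : t ≤ u := by
        by_contra! hut
        have := count_monotone p (show u + 1 ≤ t by omega)
        omega
      exact ⟨u, htu, u.lt_succ_self, hpu, by omega⟩

theorem Nat.count_lt_count_add {k : ℕ} (hp : ∀ t, ∃ s, t ≤ s ∧ s < t + k ∧ p s) (t : ℕ) :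
    count p t < count p (t + k) := by
  obtain ⟨s, hts, hsk, hs⟩ := hp t
  calc count p t ≤ count p s := count_monotone p hts
    _ < count p (s + 1) := count_lt_count_succ_iff.mpr hs
    _ ≤ count p (t + k) := count_monotone p hsk

theorem Nat.exists_count_mod_two_eq {k : ℕ} (hp : ∀ t, ∃ s, t ≤ s ∧ s < t + k ∧ p s)
    (t : ℕ) {r : ℕ} (hr : r < 2) :
    ∃ s, t ≤ s ∧ s < t + 2 * k ∧ p s ∧ count p s % 2 = r := by
  have h₁ := count_lt_count_add hp t
  have h₂ := count_lt_count_add hp (t + k)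
  rw [add_assoc, ← two_mul] at h₂
  -- of the two counts `count p t` and `count p t + 1`, take the one of parity `r`
  have hj : count p t + (count p t + r) % 2 ∈ Set.Ico (count p t) (count p (t + 2 * k)) := by
    constructor <;> omega
  obtain ⟨s, hts, hsu, hs, hcount⟩ :=
    exists_count_eq_of_count_le_of_lt_count hj.1 hj.2
  exact ⟨s, hts, hsu, hs, by omega⟩

end Count

/-- Job `0` of `k :: A` becomes jobs `0` and `1` of `2 * k :: 2 * k :: A`, taken alternately
according to the parity of its previous occurrences; job `j + 1` becomes job `j + 2`. -/
def splitSchedule (A : List ℕ) (k : ℕ) (f : ℕ → Fin (k :: A).length) (s : ℕ) :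
    Fin (2 * k :: 2 * k :: A).length :=
  Fin.cases ⟨count (f · = 0) s % 2, by simp; omega⟩ (fun j => j.succ.succ) (f s)

theorem valid_splitSchedule {A : List ℕ} {k : ℕ} {f : ℕ → Fin (k :: A).length}
    (hf : Valid (k :: A) f) : Valid (2 * k :: 2 * k :: A) (splitSchedule A k f) := by
  intro i t
  by_cases hi : i.val < 2
  · obtain ⟨s, hts, hst, hs, hparity⟩ :=
      exists_count_mod_two_eq (p := (f · = 0)) (fun t => hf 0 t) t hi
    have hget : (2 * k :: 2 * k :: A).get i = 2 * k := by
      match i, hi with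
      | ⟨0, _⟩, _ | ⟨1, _⟩, _ => rfl
    refine ⟨s, hts, hget.symm ▸ hst, ?_⟩
    simp only [splitSchedule, hs]
    exact Fin.ext hparity
  · obtain ⟨j, rfl⟩ : ∃ j : Fin A.length, i = j.succ.succ :=
      ⟨⟨i - 2, by have := i.isLt; simp only [List.length_cons] at this; omega⟩, by ext; simp; omega⟩
    obtain ⟨s, hts, hst, hs⟩ := hf j.succ t
    exact ⟨s, hts, hst, by simp [splitSchedule, hs]⟩

theorem stmt_5_general (A : List ℕ) (k : ℕ)
    (h : Schedulable (k :: A)) : Schedulable (2 * k :: 2 * k :: A) := by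
  obtain ⟨f, hf⟩ := h
  exact ⟨splitSchedule A k f, valid_splitSchedule hf⟩

theorem stmt_5 (A : List ℕ) (k : ℕ) (hk : 0 < k)
    (h : Schedulable (k :: A)) : Schedulable (2 * k :: 2 * k :: A) :=
  stmt_5_general A k h
end

section
/- If a pinwheel instance A contains three jobs with periods a ≤ b ≤ c, and the instance obtained by replacing these three jobs with a single job of period ⌊a/3⌋ is schedulable, then A is schedulable. -/
def cnt (g : ℕ → ℕ) : ℕ → ℕ
  | 0 => 0
  | s+1 => cnt g s + if g s = 0 then 1 else 0

lemma cnt_stable (g : ℕ → ℕ) (u : ℕ) :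
    ∀ v, u ≤ v → (∀ x, u ≤ x → x < v → g x ≠ 0) → cnt g v = cnt g u := by
  intro v
  induction v with
  | zero =>
    intro h _
    rw [Nat.le_zero.mp h]
  | succ n ih =>
    intro huv hno
    rcases Nat.eq_or_lt_of_le huv with h | h
    · rw [h]
    · have h1 : cnt g n = cnt g u := ih (by omega) (fun x hx1 hx2 => hno x hx1 (by omega))
      simp [cnt, h1, hno n (by omega) (by omega)]

theorem stmt_6 (A : List ℕ) (a b c : ℕ) (ha : 0 < a) (hab : a ≤ b) (hbc : b ≤ c)
    (h : Schedulable (a / 3 :: A)) : Schedulable (a :: b :: c :: A) := by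
  classical
  obtain ⟨f, hf⟩ := h
  have hlen0 : 0 < (a / 3 :: A).length := by simp
  have hget0 : (a / 3 :: A).get ⟨0, hlen0⟩ = a / 3 := rfl
  have hq0 : 0 < a / 3 := by
    by_contra hq0
    obtain ⟨s, hs1, hs2, _⟩ := hf ⟨0, hlen0⟩ 0
    rw [hget0] at hs2
    omega
  set g : ℕ → ℕ := fun s => (f s).val with hgdef
  have hnext : ∀ u, ∃ s, u < s ∧ s ≤ u + a / 3 ∧ g s = 0 := by
    intro u
    obtain ⟨s, hs1, hs2, hs3⟩ := hf ⟨0, hlen0⟩ (u+1)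
    rw [hget0] at hs2
    exact ⟨s, by omega, by omega, by simp [hgdef, hs3]⟩
  have hex : ∀ u, ∃ s, u < s ∧ g s = 0 :=
    fun u => (hnext u).imp (fun s hs => ⟨hs.1, hs.2.2⟩)
  set nx : ℕ → ℕ := fun u => Nat.find (hex u) with hnxdef
  have hnx_lt : ∀ u, u < nx u := fun u => (Nat.find_spec (hex u)).1
  have hnx_occ : ∀ u, g (nx u) = 0 := fun u => (Nat.find_spec (hex u)).2
  have hnx_le : ∀ u, nx u ≤ u + a / 3 := by
    intro u
    obtain ⟨s, h1, h2, h3⟩ := hnext u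
    exact le_trans (Nat.find_min' (hex u) ⟨h1, h3⟩) h2
  have hnx_cnt : ∀ u, g u = 0 → cnt g (nx u) = cnt g u + 1 := by
    intro u hu
    have h1 : cnt g (nx u) = cnt g (u+1) := by
      apply cnt_stable g (u+1) (nx u) (hnx_lt u)
      intro x hx1 hx2 hx3
      exact Nat.find_min (hex u) hx2 ⟨by omega, hx3⟩
    rw [h1]
    simp [cnt, hu]
  have hlen : (a :: b :: c :: A).length = A.length + 3 := rfl
  have hbound : ∀ s, g s + 2 < (a :: b :: c :: A).length := by
    intro s
    have := (f s).isLt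
    simp only [hgdef, List.length] at this ⊢
    omega
  set F : ℕ → Fin (a :: b :: c :: A).length := fun s =>
    if g s = 0 then ⟨cnt g s % 3, by rw [hlen]; omega⟩ else ⟨g s + 2, hbound s⟩ with hFdef
  refine ⟨F, ?_⟩
  intro i t
  have key : ∀ j, j < 3 → ∃ s, t ≤ s ∧ s < t + 3 * (a / 3) ∧ g s = 0 ∧ cnt g s % 3 = j := by
    intro j hj
    obtain ⟨s0, h01, h02, h03⟩ := hf ⟨0, hlen0⟩ t
    rw [hget0] at h02
    have hs0 : g s0 = 0 := by simp [hgdef, h03]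
    have hc1 : cnt g (nx s0) = cnt g s0 + 1 := hnx_cnt s0 hs0
    have hc2 : cnt g (nx (nx s0)) = cnt g (nx s0) + 1 := hnx_cnt (nx s0) (hnx_occ s0)
    have hb1 : nx s0 ≤ s0 + a / 3 := hnx_le s0
    have hb2 : nx (nx s0) ≤ nx s0 + a / 3 := hnx_le (nx s0)
    have hl1 : s0 < nx s0 := hnx_lt s0
    have hl2 : nx s0 < nx (nx s0) := hnx_lt (nx s0)
    have hcases : cnt g s0 % 3 = j ∨ cnt g (nx s0) % 3 = j ∨ cnt g (nx (nx s0)) % 3 = j := by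
      omega
    rcases hcases with hc | hc | hc
    · exact ⟨s0, h01, by omega, hs0, hc⟩
    · exact ⟨nx s0, by omega, by omega, hnx_occ s0, hc⟩
    · exact ⟨nx (nx s0), by omega, by omega, hnx_occ (nx s0), hc⟩
  obtain ⟨iv, hiv⟩ := i
  rcases Nat.lt_or_ge iv 3 with h3 | h3
  · obtain ⟨s, hs1, hs2, hs3, hs4⟩ := key iv h3
    refine ⟨s, hs1, ?_, ?_⟩
    · have hga : a ≤ (a :: b :: c :: A).get ⟨iv, hiv⟩ := by
        interval_cases iv
        · simp
        · simpa using hab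
        · simpa using le_trans hab hbc
      omega
    · simp only [hFdef]
      rw [if_pos hs3]
      exact Fin.ext hs4
  · obtain ⟨k, rfl⟩ : ∃ k, iv = k + 3 := ⟨iv - 3, by omega⟩
    have hk : k + 1 < (a / 3 :: A).length := by
      simp only [List.length] at hiv ⊢
      omega
    obtain ⟨s, hs1, hs2, hs3⟩ := hf ⟨k + 1, hk⟩ t
    have hgs : g s = k + 1 := by simp [hgdef, hs3]
    refine ⟨s, hs1, ?_, ?_⟩
    · have hgeq : (a / 3 :: A).get ⟨k + 1, hk⟩ = (a :: b :: c :: A).get ⟨k + 3, hiv⟩ := rfl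
      rw [hgeq] at hs2
      exact hs2
    · simp only [hFdef]
      rw [if_neg (by omega)]
      exact Fin.ext (by simp [hgs])
end

section
/- Let A be a pinwheel instance and θ a positive real. Then D(fold_θ(A)) ≤ D(A) + 1/θ, where D denotes density (the sum of reciprocals of the elements). -/
/-- `FoldRel θ A B` holds when `B` is a possible result of running the fold
procedure on `A`: while `max A > θ`, let `a` and `b` be the largest and second
largest values in `A`; delete `a`; if `b > θ`, replace `b` by `b / 2`; otherwise
insert `θ`. -/
inductive FoldRel (θ : ℝ) : Multiset ℝ → Multiset ℝ → Prop
  | done (A : Multiset ℝ) (h : ∀ x ∈ A, x ≤ θ) : FoldRel θ A A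
  | half (A C : Multiset ℝ) (a b : ℝ)
      (haA : a ∈ A) (hamax : ∀ x ∈ A, x ≤ a)
      (hbA : b ∈ A.erase a) (hbmax : ∀ x ∈ A.erase a, x ≤ b)
      (hagt : θ < a) (hbgt : θ < b)
      (hrec : FoldRel θ (b / 2 ::ₘ (A.erase a).erase b) C) : FoldRel θ A C
  | cap (A C : Multiset ℝ) (a b : ℝ)
      (haA : a ∈ A) (hamax : ∀ x ∈ A, x ≤ a)
      (hbA : b ∈ A.erase a) (hbmax : ∀ x ∈ A.erase a, x ≤ b)
      (hagt : θ < a) (hble : b ≤ θ)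
      (hrec : FoldRel θ (θ ::ₘ A.erase a) C) : FoldRel θ A C

/-- Density of a multiset of (real) periods: sum of reciprocals. -/
noncomputable def densityM (A : Multiset ℝ) : ℝ := (A.map fun x => 1 / x).sum

lemma densityM_cons (x : ℝ) (S : Multiset ℝ) :
    densityM (x ::ₘ S) = 1 / x + densityM S := by simp [densityM]

lemma densityM_erase {a : ℝ} {A : Multiset ℝ} (h : a ∈ A) :
    densityM A = 1 / a + densityM (A.erase a) := by
  conv_lhs => rw [← Multiset.cons_erase h]
  exact densityM_cons a _

lemma exists_max (S : Multiset ℝ) (h : S ≠ 0) : ∃ m ∈ S, ∀ x ∈ S, x ≤ m := by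
  induction S using Multiset.induction with
  | empty => exact absurd rfl h
  | cons y T ih =>
    rcases eq_or_ne T 0 with rfl | hT
    · exact ⟨y, by simp⟩
    · obtain ⟨m, hm, hmax⟩ := ih hT
      rcases le_total y m with hy | hy
      · exact ⟨m, Multiset.mem_cons_of_mem hm, by
          intro x hx
          rcases Multiset.mem_cons.1 hx with rfl | hx
          · exact hy
          · exact hmax x hx⟩
      · exact ⟨y, Multiset.mem_cons_self y T, by
          intro x hx
          rcases Multiset.mem_cons.1 hx with rfl | hx
          · exact le_rfl
          · exact (hmax x hx).trans hy⟩

lemma foldrel_done {θ : ℝ} {A B : Multiset ℝ} (h : FoldRel θ A B)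
    (hle : ∀ x ∈ A, x ≤ θ) : B = A := by
  cases h with
  | done => rfl
  | half A C a b haA hamax hbA hbmax hagt hbgt hrec =>
    exact absurd (hle a haA) (not_le.2 hagt)
  | cap A C a b haA hamax hbA hbmax hagt hble hrec =>
    exact absurd (hle a haA) (not_le.2 hagt)

lemma foldrel_key {θ : ℝ} (hθ : 0 < θ) {A B : Multiset ℝ} (h : FoldRel θ A B) :
    (∀ x ∈ A, 0 < x) → ∀ a ∈ A, (∀ x ∈ A, x ≤ a) → θ < a →
    densityM B ≤ densityM A + 1 / θ - 1 / a := by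
  induction h with
  | done A h =>
    intro _ a ha _ hagt
    exact absurd (h a ha) (not_le.2 hagt)
  | half A C a b haA hamax hbA hbmax hagt hbgt hrec ih =>
    intro hpos a' ha' hmax' hagt'
    have haa' : a = a' := le_antisymm (hmax' a haA) (hamax a' ha')
    subst haa'
    have hbpos : 0 < b := hθ.trans hbgt
    have hapos : 0 < a := hθ.trans hagt
    have hba : b ≤ a := hamax b (Multiset.mem_of_mem_erase hbA)
    -- density of the new multiset
    have hDA : densityM A = 1 / a + (1 / b + densityM ((A.erase a).erase b)) := by
      rw [densityM_erase haA, densityM_erase hbA]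
    set A' : Multiset ℝ := b / 2 ::ₘ (A.erase a).erase b with hA'
    have hDA' : densityM A' = 2 / b + densityM ((A.erase a).erase b) := by
      rw [hA', densityM_cons]
      have : (1 : ℝ) / (b / 2) = 2 / b := by
        field_simp
      rw [this]
    have hpos' : ∀ x ∈ A', 0 < x := by
      intro x hx
      rcases Multiset.mem_cons.1 hx with rfl | hx
      · linarith
      · exact hpos x (Multiset.mem_of_mem_erase (Multiset.mem_of_mem_erase hx))
    have hub : ∀ x ∈ A', x ≤ b := by
      intro x hx
      rcases Multiset.mem_cons.1 hx with rfl | hx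
      · linarith
      · exact hbmax x (Multiset.mem_of_mem_erase hx)
    by_cases hall : ∀ x ∈ A', x ≤ θ
    · have hC : C = A' := foldrel_done hrec hall
      rw [hC, hDA', hDA]
      have h1 : 1 / b ≤ 1 / θ := by
        apply one_div_le_one_div_of_le hθ (le_of_lt hbgt)
      have h2 : (2 : ℝ) / b = 1 / b + 1 / b := by ring
      linarith
    · push_neg at hall
      obtain ⟨m, hm, hmax⟩ := exists_max A' (by
        intro h0
        exact absurd (Multiset.mem_cons_self (b / 2) _) (by rw [← hA', h0]; simp))
      have hmθ : θ < m := by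
        obtain ⟨y, hy, hyθ⟩ := hall
        exact lt_of_lt_of_le hyθ (hmax y hy)
      have hmd := ih hpos' m hm hmax hmθ
      have hmb : m ≤ b := hub m hm
      have h1 : 1 / b ≤ 1 / m := by
        apply one_div_le_one_div_of_le (hθ.trans hmθ) hmb
      rw [hDA]
      have h2 : (2 : ℝ) / b = 1 / b + 1 / b := by ring
      linarith [hDA']
  | cap A C a b haA hamax hbA hbmax hagt hble hrec ih =>
    intro hpos a' ha' hmax' hagt'
    have haa' : a = a' := le_antisymm (hmax' a haA) (hamax a' ha')
    subst haa'
    have hall : ∀ x ∈ θ ::ₘ A.erase a, x ≤ θ := by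
      intro x hx
      rcases Multiset.mem_cons.1 hx with rfl | hx
      · exact le_rfl
      · exact (hbmax x hx).trans hble
    have hC : C = θ ::ₘ A.erase a := foldrel_done hrec hall
    rw [hC, densityM_cons, densityM_erase haA]
    ring_nf
    linarith

theorem stmt_8 (θ : ℝ) (hθ : 0 < θ) (A B : Multiset ℝ) (hpos : ∀ x ∈ A, 0 < x)
    (h : FoldRel θ A B) : densityM B ≤ densityM A + 1 / θ := by
  by_cases hall : ∀ x ∈ A, x ≤ θ
  · rw [foldrel_done h hall]
    have : 0 < 1 / θ := by positivity
    linarith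
  · push_neg at hall
    obtain ⟨y, hy, hyθ⟩ := hall
    have hA0 : A ≠ 0 := by
      intro h0; rw [h0] at hy; exact absurd hy (Multiset.notMem_zero y)
    obtain ⟨m, hm, hmax⟩ := exists_max A hA0
    have hmθ : θ < m := lt_of_lt_of_le hyθ (hmax y hy)
    have hkey := foldrel_key hθ h hpos m hm hmax hmθ
    have hmpos : 0 < m := hθ.trans hmθ
    have : 0 < 1 / m := by positivity
    linarith
end

section
/- If a pinwheel instance A is unschedulable, then fold_θ(A) is unschedulable; equivalently, if fold_θ(A) is schedulable then A is schedulable. -/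
/-- A schedule for a list of real periods is valid if each job with period `r`
is scheduled at least `⌊L / r⌋` times in every window of `L` consecutive days. -/
def ValidR (l : List ℝ) (f : ℕ → Fin l.length) : Prop :=
  ∀ (i : Fin l.length) (t L : ℕ),
    ⌊(L : ℝ) / l.get i⌋ ≤ (((Finset.Ico t (t + L)).filter fun s => f s = i).card : ℤ)

/-- A multiset of real periods is schedulable if some enumeration of it admits a
valid schedule. -/
def SchedulableR (A : Multiset ℝ) : Prop :=
  ∃ l : List ℝ, (l : Multiset ℝ) = A ∧ ∃ f, ValidR l f

/-!
Every fold step turns `A` into an instance from which `A` is recovered by two operations that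
preserve schedulability: lengthening one period (`θ` or `b` back to `a`), and replacing one job of
period `b / 2` by two jobs of period `b`. For the latter, hand the services of the fast job
alternately to the two slow ones: a window of `L` days contains at least `⌊2L / b⌋ ≥ 2⌊L / b⌋`
services of the fast job, and alternation gives each slow job at least half of them.
-/

open Finset Function

theorem Finset.univ_val_map_update {ι α : Type*} [Fintype ι] [DecidableEq ι] (p : ι → α)
    (i₀ : ι) (a : α) : univ.val.map (update p i₀ a) = a ::ₘ (univ.erase i₀).val.map p := by
  rw [← Multiset.cons_erase (mem_univ_val i₀), Multiset.map_cons, update_self, erase_val]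
  congr 1
  refine Multiset.map_congr rfl fun i hi => update_of_ne ?_ a p
  rintro rfl
  exact univ.nodup.notMem_erase hi

theorem Finset.univ_val_map_option_elim {ι α : Type*} [Fintype ι] (a : α) (q : ι → α) :
    univ.val.map (fun o : Option ι => o.elim a q) = a ::ₘ univ.val.map q := by
  rw [univ_option]
  simp [insertNone, comp_def]

theorem Finset.exists_of_univ_val_map_eq_cons {ι α : Type*} [Fintype ι] [DecidableEq ι]
    {p : ι → α} {c : α} {M : Multiset α} (h : univ.val.map p = c ::ₘ M) :
    ∃ i₀, p i₀ = c ∧ (univ.erase i₀).val.map p = M := by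
  obtain ⟨i₀, -, hi₀⟩ := Multiset.mem_map.mp (h ▸ Multiset.mem_cons_self c M)
  rw [← update_eq_self i₀ p, univ_val_map_update, hi₀] at h
  exact ⟨i₀, hi₀, Multiset.cons_inj_right c |>.mp h⟩

theorem Nat.card_filter_Ico_count (P Q : ℕ → Prop) [DecidablePred P] [DecidablePred Q]
    (t L : ℕ) : #{s ∈ Ico t (t + L) | P s ∧ Q (count P s)} =
      #{n ∈ Ico (count P t) (count P (t + L)) | Q n} := by
  induction L with
  | zero => simp
  | succ L ih =>
    have hmono : count P t ≤ count P (t + L) := count_monotone P (by omega)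
    rw [← add_assoc, count_succ, card_filter, sum_Ico_succ_top (by omega), ← card_filter, ih]
    by_cases hP : P (t + L)
    · simp only [hP, true_and, if_true]
      rw [card_filter, card_filter, sum_Ico_succ_top hmono]
    · simp [hP]

theorem Nat.half_le_card_filter_Ico_even_add (m k r : ℕ) :
    k / 2 ≤ #{n ∈ Ico m (m + k) | Even (n + r)} := by
  simpa using card_le_card_of_injOn (s := range (k / 2)) (fun j => m + 2 * j + (m + r) % 2)
    (fun j hj => by simp only [coe_range, Set.mem_Iio] at hj; simp [Nat.even_iff]; omega)
    (fun i _ j _ hij => by simp only at hij; omega)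

theorem Nat.half_card_filter_le_card_filter_even_count_add (P : ℕ → Prop) [DecidablePred P]
    (t L r : ℕ) :
    #{s ∈ Ico t (t + L) | P s} / 2 ≤ #{s ∈ Ico t (t + L) | P s ∧ Even (count P s + r)} := by
  have hcount : count P (t + L) = count P t + #{s ∈ Ico t (t + L) | P s} := by
    have h := card_filter_Ico_count P (fun _ => True) t L
    simp only [and_true, filter_true, Nat.card_Ico] at h
    have := count_monotone P (show t ≤ t + L by omega)
    omega
  rw [card_filter_Ico_count P (fun n => Even (n + r)), hcount]
  exact half_le_card_filter_Ico_even_add _ _ r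

def IsPinwheelSchedule {ι : Type*} [DecidableEq ι] (p : ι → ℝ) (f : ℕ → ι) : Prop :=
  ∀ (i : ι) (t L : ℕ), ⌊(L : ℝ) / p i⌋ ≤ (#{s ∈ Ico t (t + L) | f s = i} : ℤ)

section Schedules

variable {ι κ : Type*} [DecidableEq ι] [DecidableEq κ] {p : ι → ℝ} {f : ℕ → ι}

theorem IsPinwheelSchedule.comp_equiv (h : IsPinwheelSchedule p f) (e : ι ≃ κ) :
    IsPinwheelSchedule (p ∘ e.symm) (e ∘ f) := by
  intro j t L
  simpa only [comp_apply, ← Equiv.eq_symm_apply] using h (e.symm j) t L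

theorem IsPinwheelSchedule.update_of_le (h : IsPinwheelSchedule p f) {i₀ : ι} {a : ℝ}
    (hpos : 0 < p i₀) (hle : p i₀ ≤ a) : IsPinwheelSchedule (update p i₀ a) f := by
  intro i t L
  rcases eq_or_ne i i₀ with rfl | hi
  · rw [update_self]
    exact (Int.floor_le_floor (div_le_div_of_nonneg_left L.cast_nonneg hpos hle)).trans (h i t L)
  · rw [update_of_ne hi]
    exact h i t L

end Schedules

theorem SchedulableR.exists_isPinwheelSchedule {A : Multiset ℝ} (h : SchedulableR A) :
    ∃ (n : ℕ) (p : Fin n → ℝ) (f : ℕ → Fin n), univ.val.map p = A ∧ IsPinwheelSchedule p f := by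
  obtain ⟨l, rfl, f, hf⟩ := h
  exact ⟨l.length, l.get, f, by rw [Fin.univ_val_map, List.ofFn_get], hf⟩

theorem IsPinwheelSchedule.schedulableR {ι : Type*} [Fintype ι] [DecidableEq ι] {p : ι → ℝ}
    {f : ℕ → ι} (h : IsPinwheelSchedule p f) : SchedulableR (univ.val.map p) := by
  let l := List.ofFn (p ∘ (Fintype.equivFin ι).symm)
  let e : ι ≃ Fin l.length := (Fintype.equivFin ι).trans (finCongr List.length_ofFn.symm)
  have hl : l.get = p ∘ e.symm := by
    funext i
    simp [l, e, List.getElem_ofFn]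
    rfl
  refine ⟨l, ?_, e ∘ f, ?_⟩
  · rw [← List.ofFn_get l, ← Fin.univ_val_map, hl, ← Multiset.map_map,
      Multiset.map_univ_val_equiv]
  · show IsPinwheelSchedule l.get _
    rw [hl]
    exact h.comp_equiv e

section Split

variable {ι : Type*} [DecidableEq ι]

/-- Successive services of `i₀` alternate between `some i₀` and the new job `none`, so in every
window each of the two receives at least half of them. -/
def splitAlternately (f : ℕ → ι) (i₀ : ι) (s : ℕ) : Option ι :=
  if f s = i₀ ∧ ¬Even (Nat.count (f · = i₀) s) then none else some (f s)

theorem IsPinwheelSchedule.splitAlternately_of_eq_half {p : ι → ℝ} {f : ℕ → ι}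
    (h : IsPinwheelSchedule p f) {i₀ : ι} {b : ℝ} (hb : p i₀ = b / 2) :
    IsPinwheelSchedule (fun o => o.elim b (update p i₀ b)) (splitAlternately f i₀) := by
  have hhalf : ∀ (t L r : ℕ), ⌊(L : ℝ) / b⌋ ≤
      (#{s ∈ Ico t (t + L) | f s = i₀ ∧ Even (Nat.count (f · = i₀) s + r)} : ℤ) := by
    intro t L r
    have h2 : 2 * ⌊(L : ℝ) / b⌋ ≤ #{s ∈ Ico t (t + L) | f s = i₀} := by
      calc 2 * ⌊(L : ℝ) / b⌋ = ⌊(L : ℝ) / b⌋ + ⌊(L : ℝ) / b⌋ := two_mul _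
        _ ≤ ⌊(L : ℝ) / b + L / b⌋ := Int.le_floor_add _ _
        _ = ⌊(L : ℝ) / p i₀⌋ := by rw [hb]; ring_nf
        _ ≤ _ := h i₀ t L
    have := Nat.half_card_filter_le_card_filter_even_count_add (f · = i₀) t L r
    omega
  rintro (_ | i) t L
  · have hnone : ∀ s, splitAlternately f i₀ s = none ↔
        f s = i₀ ∧ Even (Nat.count (f · = i₀) s + 1) := by
      intro s
      simp [splitAlternately, Nat.even_add_one]
    simpa only [Option.elim_none, hnone] using hhalf t L 1
  · rcases eq_or_ne i i₀ with rfl | hi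
    · have hsome : ∀ s, splitAlternately f i s = some i ↔
          f s = i ∧ Even (Nat.count (f · = i) s + 0) := by
        intro s
        by_cases hs : f s = i <;> simp [splitAlternately, hs]
      simpa only [Option.elim_some, update_self, hsome] using hhalf t L 0
    · have hsome : ∀ s, splitAlternately f i₀ s = some i ↔ f s = i := by
        intro s
        by_cases hs : f s = i₀ <;> simp [splitAlternately, hs, hi.symm]
      simpa only [Option.elim_some, update_of_ne hi, hsome] using h i t L

end Split

theorem SchedulableR.cons_of_le {c a : ℝ} {M : Multiset ℝ} (hc : 0 < c) (hca : c ≤ a)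
    (h : SchedulableR (c ::ₘ M)) : SchedulableR (a ::ₘ M) := by
  obtain ⟨n, p, f, hpM, hf⟩ := h.exists_isPinwheelSchedule
  obtain ⟨i₀, rfl, hM⟩ := exists_of_univ_val_map_eq_cons hpM
  have := (hf.update_of_le hc hca).schedulableR
  rwa [univ_val_map_update, hM] at this

theorem SchedulableR.cons_cons_of_half {b : ℝ} {M : Multiset ℝ}
    (h : SchedulableR (b / 2 ::ₘ M)) : SchedulableR (b ::ₘ b ::ₘ M) := by
  obtain ⟨n, p, f, hpM, hf⟩ := h.exists_isPinwheelSchedule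
  obtain ⟨i₀, hi₀, hM⟩ := exists_of_univ_val_map_eq_cons hpM
  have := (hf.splitAlternately_of_eq_half hi₀).schedulableR
  rwa [univ_val_map_option_elim, univ_val_map_update, hM] at this

theorem stmt_9_general (θ : ℝ) (hθ : 0 < θ) (A B : Multiset ℝ)
    (h : FoldRel θ A B) (hB : SchedulableR B) : SchedulableR A := by
  induction h with
  | done => exact hB
  | half A _ a b haA hamax hbA _ _ hbgt _ ih =>
    have hdoubled := (ih hB).cons_cons_of_half
    rw [Multiset.cons_erase hbA] at hdoubled
    simpa only [Multiset.cons_erase haA] using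
      hdoubled.cons_of_le (hθ.trans hbgt) (hamax b (Multiset.mem_of_mem_erase hbA))
  | cap A _ a _ haA _ _ _ hagt _ _ ih =>
    simpa only [Multiset.cons_erase haA] using (ih hB).cons_of_le hθ hagt.le

theorem stmt_9 (θ : ℝ) (hθ : 0 < θ) (A B : Multiset ℝ) (hpos : ∀ x ∈ A, 0 < x)
    (h : FoldRel θ A B) (hB : SchedulableR B) : SchedulableR A :=
  stmt_9_general θ hθ A B h hB
end

section
/- G(m) ≤ 1 − (m−1)/(m(m+1)) for every integer m ≥ 2, where G(m) is the largest density bound guaranteeing schedulability for instances with minimum period at least m. -/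
/-- `G m` is the supremum of density bounds `d` such that every (nonempty) pinwheel
instance with all periods at least `m` and density at most `d` is schedulable. -/
noncomputable def G (m : ℕ) : ℝ :=
  sSup {d : ℝ | ∀ A : List ℕ, A ≠ [] → (∀ x ∈ A, m ≤ x) → density A ≤ d → Schedulable A}


/-! Consider the instance `(x, m, m+1, …, m+1)` with `m - 1` copies of `m + 1`; its density
tends to `1 - (m-1)/(m(m+1))` from above as `x → ∞`. It is never schedulable: let `t` be a slot
given to the job of period `x`. For each of the `m` other jobs `i`, let `bᵢ` and `cᵢ` be the
distances from `t` back and forward to its nearest occurrences. Then `bᵢ + cᵢ ≤ pᵢ`, and since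
distinct jobs occupy distinct slots, the `bᵢ` are distinct positive integers, and so are the
`cᵢ`. Hence `∑ pᵢ ≥ 2 (1 + ⋯ + m) = m (m + 1)`, whereas `∑ pᵢ = m + (m - 1)(m + 1) = m (m + 1) - 1`.
-/

open Finset

section Windows

variable {α : Type*} (f : ℕ → α)

/-- `Valid a f` says exactly `∀ i, InEveryWindow f i (a.get i)`. -/
def InEveryWindow (i : α) (p : ℕ) : Prop :=
  ∀ u, ∃ s, u ≤ s ∧ s < u + p ∧ f s = i

variable {f}

theorem InEveryWindow.le_add_of_forall_ne {i : α} {p u v : ℕ} (h : InEveryWindow f i p)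
    (hgap : ∀ s, u < s → s < v → f s ≠ i) : v ≤ u + p := by
  obtain ⟨s, hus, hsp, hs⟩ := h (u + 1)
  by_contra! hvu
  exact hgap s (by omega) (by omega) hs

theorem exists_last_occurrence_lt {i : α} {s₀ t : ℕ} (hs₀ : f s₀ = i) (hst : s₀ < t) :
    ∃ u < t, f u = i ∧ ∀ s, u < s → s < t → f s ≠ i := by
  classical
  refine ⟨Nat.findGreatest (f · = i) (t - 1), ?_, ?_, fun s hus hst => ?_⟩
  · have := Nat.findGreatest_le (P := (f · = i)) (t - 1)
    omega
  · exact Nat.findGreatest_spec (P := (f · = i)) (by omega : s₀ ≤ t - 1) hs₀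
  · exact Nat.findGreatest_is_greatest hus (by omega)

theorem exists_first_occurrence_gt {i : α} {s₀ t : ℕ} (hs₀ : f s₀ = i) (hts : t < s₀) :
    ∃ v, t < v ∧ f v = i ∧ ∀ s, t < s → s < v → f s ≠ i := by
  classical
  have hex : ∃ v, t < v ∧ f v = i := ⟨s₀, hts, hs₀⟩
  obtain ⟨htv, hv⟩ := Nat.find_spec hex
  exact ⟨Nat.find hex, htv, hv, fun s hts hsv hs => Nat.find_min hex hsv ⟨hts, hs⟩⟩

end Windows

theorem Finset.card_mul_succ_le_two_mul_sum {α : Type*} (s : Finset α) {d : α → ℕ}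
    (hinj : Set.InjOn d s) (hpos : ∀ i ∈ s, 0 < d i) :
    #s * (#s + 1) ≤ 2 * ∑ i ∈ s, d i := by
  classical
  induction s using induction_on_max_value d with
  | empty => simp
  | insert a s has hmax ih =>
    have hmaps : ∀ x ∈ insert a s, d x ∈ Icc 1 (d a) := fun x hx => by
      rcases mem_insert.1 hx with rfl | hxs
      · exact mem_Icc.2 ⟨hpos x hx, le_rfl⟩
      · exact mem_Icc.2 ⟨hpos x hx, hmax x hxs⟩
    have hcard : #(insert a s) ≤ d a := by simpa using card_le_card_of_injOn d hmaps hinj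
    have hs := ih (hinj.mono (by simp)) (fun i hi => hpos i (mem_insert_of_mem hi))
    rw [card_insert_of_notMem has] at hcard ⊢
    rw [sum_insert has]
    nlinarith

theorem card_mul_succ_le_sum_of_notMem {α : Type*} {f : ℕ → α} {S : Finset α} {p : α → ℕ}
    (hS : ∀ i ∈ S, InEveryWindow f i (p i)) {t : ℕ} (ht : ∀ i ∈ S, p i ≤ t) (hft : f t ∉ S) :
    #S * (#S + 1) ≤ ∑ i ∈ S, p i := by
  have hprev : ∀ i ∈ S, ∃ u < t, f u = i ∧ ∀ s, u < s → s < t → f s ≠ i := fun i hi => by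
    obtain ⟨s, -, hs, hfs⟩ := hS i hi (t - p i)
    exact exists_last_occurrence_lt hfs (by have := ht i hi; omega)
  have hnext : ∀ i ∈ S, ∃ v, t < v ∧ f v = i ∧ ∀ s, t < s → s < v → f s ≠ i := fun i hi => by
    obtain ⟨s, hs, -, hfs⟩ := hS i hi (t + 1)
    exact exists_first_occurrence_gt hfs (by omega)
  choose! u hut hu hu_last using hprev
  choose! v htv hv hv_first using hnext
  have hgap : ∀ i ∈ S, v i - u i ≤ p i := fun i hi => by
    have := (hS i hi).le_add_of_forall_ne (u := u i) (v := v i) fun s h₁ h₂ hs => by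
      rcases lt_trichotomy s t with hst | rfl | hts
      · exact hu_last i hi s h₁ hst hs
      · exact hft (hs ▸ hi)
      · exact hv_first i hi s hts h₂ hs
    omega
  have hback := S.card_mul_succ_le_two_mul_sum (d := fun i => t - u i)
    (fun i hi j hj (hij : t - u i = t - u j) => by
      have : u i = u j := by have := hut i hi; have := hut j hj; omega
      rw [← hu i hi, ← hu j hj, this])
    (fun i hi => by have := hut i hi; omega)
  have hfwd := S.card_mul_succ_le_two_mul_sum (d := fun i => v i - t)
    (fun i hi j hj (hij : v i - t = v j - t) => by
      have : v i = v j := by have := htv i hi; have := htv j hj; omega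
      rw [← hv i hi, ← hv j hj, this])
    (fun i hi => by have := htv i hi; omega)
  have hsum : ∑ i ∈ S, (t - u i) + ∑ i ∈ S, (v i - t) ≤ ∑ i ∈ S, p i := by
    rw [← sum_add_distrib]
    exact sum_le_sum fun i hi => by
      have := hut i hi; have := htv i hi; have := hgap i hi; omega
  linarith

theorem Schedulable.length_mul_succ_le_sum {x : ℕ} {l : List ℕ} (h : Schedulable (x :: l)) :
    l.length * (l.length + 1) ≤ l.sum := by
  obtain ⟨f, hf⟩ := h
  -- a slot of job `0` late enough that every other job has already occurred before it
  obtain ⟨t, ht, -, hft⟩ := hf 0 l.sum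
  have key := card_mul_succ_le_sum_of_notMem (S := univ.map (Fin.succEmb _))
    (p := (x :: l).get) (fun i _ => hf i) (t := t)
    (by simp only [mem_map, mem_univ, true_and, Fin.coe_succEmb, forall_exists_index]
        rintro _ i rfl
        exact (List.le_sum_of_mem (List.get_mem l i)).trans ht)
    (by simp [hft, Fin.succ_ne_zero])
  simpa using key

def blockingInstance (m x : ℕ) : List ℕ := x :: m :: List.replicate (m - 1) (m + 1)

theorem density_cons (a : ℕ) (l : List ℕ) : density (a :: l) = 1 / a + density l := rfl

theorem density_replicate (n a : ℕ) : density (List.replicate n a) = n / a := by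
  induction n with
  | zero => simp [density]
  | succ n ih => rw [List.replicate_succ, density_cons, ih]; push_cast; ring

theorem density_blockingInstance {m : ℕ} (hm : 0 < m) (x : ℕ) :
    density (blockingInstance m x) = 1 - ((m : ℝ) - 1) / (m * (m + 1)) + 1 / x := by
  have hm' : (m : ℝ) ≠ 0 := by positivity
  rw [blockingInstance, density_cons, density_cons, density_replicate, Nat.cast_sub hm]
  push_cast
  field_simp
  ring

theorem not_schedulable_blockingInstance {m : ℕ} (hm : 0 < m) (x : ℕ) :
    ¬ Schedulable (blockingInstance m x) := fun h => by
  have := h.length_mul_succ_le_sum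
  simp only [List.length_cons, List.length_replicate, List.sum_cons, List.sum_replicate,
    smul_eq_mul] at this
  obtain ⟨k, rfl⟩ := Nat.exists_eq_add_of_lt hm
  simp only [zero_add, Nat.add_sub_cancel] at this
  nlinarith

theorem stmt_19 (m : ℕ) (hm : 2 ≤ m) :
    G m ≤ 1 - ((m : ℝ) - 1) / (m * (m + 1)) := by
  have hm₀ : 0 < m := by omega
  have hbound_nonneg : 0 ≤ 1 - ((m : ℝ) - 1) / (m * (m + 1)) := by
    rw [sub_nonneg, div_le_one (by positivity)]
    nlinarith
  refine Real.sSup_le (fun d hd => ?_) hbound_nonneg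
  by_contra! hlt
  obtain ⟨n, hn⟩ := exists_nat_one_div_lt (sub_pos.2 hlt)
  refine not_schedulable_blockingInstance hm₀ (n + m) (hd _ (List.cons_ne_nil _ _) ?_ ?_)
  · simp only [blockingInstance, List.mem_cons, List.mem_replicate]
    omega
  · rw [density_blockingInstance hm₀]
    have : 1 / ((n + m : ℕ) : ℝ) ≤ 1 / ((n : ℝ) + 1) := by
      gcongr
      exact_mod_cast (by omega : n + 1 ≤ n + m)
    linarith
end
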